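/- arXiv:1701.04624 — 4 statements merged into one kernel-verified Lean document; each statement's English description precedes it below -/
import Mathlib

section
/- Let L = |v3⟩⟨v1| + |v3⟩⟨v2| on C^3 and define ρ_t as the solution of the Lindblad equation dρ/dt = LρL† − (1/2){L†L, ρ} with initial condition ρ_0 = |v1⟩⟨v1|. Then ⟨v2|ρ_t|v2⟩ = e^{-t} sinh²(t/2), which is strictly positive for all t > 0. -/
/-!
Only three linear functionals of `ρ` are needed, and each is an eigenvector of the adjoint
(Heisenberg-picture) generator `A ↦ L†AL - ½{L†L, A}`. With `u = v₁ + v₂` and `w = v₁ - v₂`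
we have `L†L = |u⟩⟨u|` and `Lw = 0`, so `⟨u|ρ|u⟩` decays at rate `2`, `⟨w|ρ|w⟩` is conserved, and
`⟨v₁|ρ|v₁⟩ - ⟨v₂|ρ|v₂⟩` decays at rate `1`. Each therefore solves a scalar linear ODE, and
`4⟨v₂|ρ|v₂⟩ = ⟨u|ρ|u⟩ + ⟨w|ρ|w⟩ - 2(⟨v₁|ρ|v₁⟩ - ⟨v₂|ρ|v₂⟩) = e^{-2t} + 1 - 2e^{-t} = (1 - e^{-t})²`.
A functional `X ↦ ∑ i j, W i j * X i j` is encoded by its weight matrix `W`; for `⟨u|X|u⟩` this is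
`|u⟩⟨u|` (transposed), and the basis vector `vₖ` is the index `k - 1 : Fin 3`.
-/

open Matrix

lemma Complex.eq_exp_mul_of_hasDerivAt_mul_self {f : ℝ → ℂ} {c : ℂ}
    (hf : ∀ t, HasDerivAt f (c * f t) t) (t : ℝ) :
    f t = Complex.exp (c * t) * f 0 := by
  have hderiv : ∀ s : ℝ, HasDerivAt (fun s : ℝ => Complex.exp (-(c * s)) * f s) 0 s := by
    intro s
    have hlin : HasDerivAt (fun s : ℝ => -(c * (s : ℂ))) (-c) s := by
      simpa using ((hasDerivAt_id s).ofReal_comp.const_mul c).fun_neg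
    exact (hlin.cexp.mul (hf s)).congr_deriv (by ring)
  have hconst : Complex.exp (-(c * t)) * f t = f 0 := by
    simpa using is_const_of_deriv_eq_zero (fun s => (hderiv s).differentiableAt)
      (fun s => (hderiv s).deriv) t 0
  rw [← hconst, ← mul_assoc, ← Complex.exp_add, add_neg_cancel, Complex.exp_zero, one_mul]

section WeightedSum

variable {n : Type*} [Fintype n]

lemma hasDerivAt_weightedSum {ρ : ℝ → Matrix n n ℂ} {ρ' : Matrix n n ℂ} {t : ℝ}
    (hρ : ∀ i j, HasDerivAt (fun s => ρ s i j) (ρ' i j) t) (W : Matrix n n ℂ) :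
    HasDerivAt (fun s => ∑ i, ∑ j, W i j * ρ s i j) (∑ i, ∑ j, W i j * ρ' i j) t :=
  HasDerivAt.fun_sum fun i _ => HasDerivAt.fun_sum fun j _ => (hρ i j).const_mul (W i j)

lemma weightedSum_eq_exp_mul {G : Matrix n n ℂ → Matrix n n ℂ} {ρ : ℝ → Matrix n n ℂ}
    (hρ : ∀ t i j, HasDerivAt (fun s => ρ s i j) (G (ρ t) i j) t) {W : Matrix n n ℂ} {c : ℂ}
    (hW : ∀ X, ∑ i, ∑ j, W i j * G X i j = c * ∑ i, ∑ j, W i j * X i j) (t : ℝ) :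
    ∑ i, ∑ j, W i j * ρ t i j = Complex.exp (c * t) * ∑ i, ∑ j, W i j * ρ 0 i j :=
  Complex.eq_exp_mul_of_hasDerivAt_mul_self
    (fun s => (hW (ρ s)) ▸ hasDerivAt_weightedSum (hρ s) W) t

end WeightedSum

noncomputable def lindbladian {n : Type*} [Fintype n] [DecidableEq n] (L X : Matrix n n ℂ) :
    Matrix n n ℂ :=
  L * X * Lᴴ - (1/2 : ℂ) • (Lᴴ * L * X + X * (Lᴴ * L))

section ThreeLevel

local notation "L₀" => !![(0 : ℂ), 0, 0; 0, 0, 0; 1, 1, 0]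

lemma weightedSum_lindbladian_uu (X : Matrix (Fin 3) (Fin 3) ℂ) :
    ∑ i, ∑ j, !![(1 : ℂ), 1, 0; 1, 1, 0; 0, 0, 0] i j * lindbladian L₀ X i j
      = -2 * ∑ i, ∑ j, !![(1 : ℂ), 1, 0; 1, 1, 0; 0, 0, 0] i j * X i j := by
  simp [lindbladian, Matrix.mul_apply, Matrix.vecMul, dotProduct, Fin.sum_univ_three,
    Matrix.conjTranspose_apply]
  ring

lemma weightedSum_lindbladian_ww (X : Matrix (Fin 3) (Fin 3) ℂ) :
    ∑ i, ∑ j, !![(1 : ℂ), -1, 0; -1, 1, 0; 0, 0, 0] i j * lindbladian L₀ X i j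
      = 0 * ∑ i, ∑ j, !![(1 : ℂ), -1, 0; -1, 1, 0; 0, 0, 0] i j * X i j := by
  simp [lindbladian, Matrix.mul_apply, Matrix.vecMul, dotProduct, Fin.sum_univ_three,
    Matrix.conjTranspose_apply]
  ring

lemma weightedSum_lindbladian_populationDifference (X : Matrix (Fin 3) (Fin 3) ℂ) :
    ∑ i, ∑ j, !![(1 : ℂ), 0, 0; 0, -1, 0; 0, 0, 0] i j * lindbladian L₀ X i j
      = -1 * ∑ i, ∑ j, !![(1 : ℂ), 0, 0; 0, -1, 0; 0, 0, 0] i j * X i j := by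
  simp [lindbladian, Matrix.mul_apply, Matrix.vecMul, dotProduct, Fin.sum_univ_three,
    Matrix.conjTranspose_apply]
  ring

end ThreeLevel

lemma Real.exp_neg_mul_sinh_half_sq (t : ℝ) :
    Real.exp (-t) * Real.sinh (t / 2) ^ 2 = ((1 - Real.exp (-t)) / 2) ^ 2 := by
  have hhalf : Real.exp (-t) = Real.exp (-(t / 2)) ^ 2 := by
    rw [← Real.exp_nat_mul]; ring_nf
  have hinv : Real.exp (-(t / 2)) * Real.exp (t / 2) = 1 := by
    rw [← Real.exp_add]; simp
  rw [Real.sinh_eq, hhalf]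
  linear_combination
    (Real.exp (-(t / 2)) * Real.exp (t / 2) + 1 - 2 * Real.exp (-(t / 2)) ^ 2) / 4 * hinv

/-- For L = |v3⟩⟨v1| + |v3⟩⟨v2| on ℂ³ and ρ_t solving the Lindblad equation with
ρ_0 = |v1⟩⟨v1|, we have ⟨v2|ρ_t|v2⟩ = e^{-t} sinh²(t/2) > 0 for t > 0. -/
theorem stmt1 (L : Matrix (Fin 3) (Fin 3) ℂ) (hL : L = !![0,0,0; 0,0,0; 1,1,0])
    (ρ : ℝ → Matrix (Fin 3) (Fin 3) ℂ)
    (hρ0 : ρ 0 = !![1,0,0; 0,0,0; 0,0,0])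
    (hderiv : ∀ (t : ℝ) (i j : Fin 3), HasDerivAt (fun s => ρ s i j)
      ((L * ρ t * Lᴴ - (1/2 : ℂ) • (Lᴴ * L * ρ t + ρ t * (Lᴴ * L))) i j) t) :
    (∀ t : ℝ, ρ t 1 1 = (Real.exp (-t) * (Real.sinh (t/2))^2 : ℝ)) ∧
    (∀ t : ℝ, 0 < t → 0 < Real.exp (-t) * (Real.sinh (t/2))^2) := by
  subst hL
  refine ⟨fun t => ?_, fun t ht => mul_pos (Real.exp_pos _)
    (pow_pos (Real.sinh_pos_iff.mpr (by linarith)) 2)⟩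
  have huu := weightedSum_eq_exp_mul hderiv weightedSum_lindbladian_uu t
  have hww := weightedSum_eq_exp_mul hderiv weightedSum_lindbladian_ww t
  have hdiff := weightedSum_eq_exp_mul hderiv weightedSum_lindbladian_populationDifference t
  simp only [of_apply, cons_val', cons_val_fin_one, Fin.sum_univ_three, Fin.isValue, cons_val_zero,
    cons_val_one, cons_val, one_mul, zero_mul, add_zero, neg_mul, hρ0, mul_one, mul_zero,
    Complex.exp_zero, zero_add] at huu hww hdiff
  rw [Real.exp_neg_mul_sinh_half_sq]
  push_cast
  have hsq : Complex.exp (-(2 * t)) = Complex.exp (-t) ^ 2 := by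
    rw [← Complex.exp_nat_mul]; ring_nf
  linear_combination huu / 4 + hww / 4 - hdiff / 2 + hsq / 4
end

section
/- Let L = |v3⟩⟨v1| + |v3⟩⟨v2| on C^3 and ρ_t the solution of dρ/dt = LρL† − (1/2){L†L, ρ} with ρ_0 = |v1⟩⟨v1|. Then ρ_t converges as t → ∞ to (1/4)(|v1⟩⟨v1| − |v1⟩⟨v2| − |v2⟩⟨v1| + |v2⟩⟨v2|) + (1/2)|v3⟩⟨v3|. -/
open Matrix Filter

private lemma hasDerivAt_cexp_mul (c : ℂ) (t : ℝ) :
    HasDerivAt (fun s : ℝ => Complex.exp (c * s)) (c * Complex.exp (c * t)) t := by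
  have h1 : HasDerivAt (fun z : ℂ => Complex.exp (c * z)) (c * Complex.exp (c * (t:ℂ))) (t : ℂ) := by
    have h2 : HasDerivAt (fun z : ℂ => c * z) c (t : ℂ) := by
      simpa using (hasDerivAt_id (t:ℂ)).const_mul c
    exact ((Complex.hasDerivAt_exp (c * (t:ℂ))).comp (t:ℂ) h2).congr_deriv (by ring)
  exact h1.comp_ofReal

private lemma ode_solve (c : ℂ) (f : ℝ → ℂ) (hf : ∀ t, HasDerivAt f (c * f t) t) (t : ℝ) :
    f t = Complex.exp (c * t) * f 0 := by
  have key : ∀ s : ℝ, HasDerivAt (fun u : ℝ => Complex.exp (-c * u) * f u) 0 s := by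
    intro s
    have h1 := (hasDerivAt_cexp_mul (-c) s).mul (hf s)
    exact h1.congr_deriv (by ring)
  have h2 : ∀ s : ℝ, Complex.exp (-c * s) * f s = f 0 := by
    intro s
    have h3 := is_const_of_deriv_eq_zero (𝕜 := ℝ)
      (f := fun u : ℝ => Complex.exp (-c * u) * f u)
      (fun u => (key u).differentiableAt) (fun u => (key u).deriv) s 0
    simpa using h3
  have h4 : Complex.exp (c * t) * Complex.exp (-c * t) = 1 := by
    rw [← Complex.exp_add, show c * (t:ℂ) + -c * (t:ℂ) = 0 by ring, Complex.exp_zero]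
  calc f t = Complex.exp (c * t) * Complex.exp (-c * t) * f t := by rw [h4, one_mul]
    _ = Complex.exp (c * t) * (Complex.exp (-c * t) * f t) := by ring
    _ = Complex.exp (c * t) * f 0 := by rw [h2 t]

private lemma tendsto_cexp_neg (c : ℝ) (hc : 0 < c) :
    Tendsto (fun t : ℝ => Complex.exp ((-c : ℂ) * t)) atTop (nhds 0) := by
  have h1 : Tendsto (fun t : ℝ => Real.exp (-c * t)) atTop (nhds 0) := by
    apply Real.tendsto_exp_atBot.comp
    have := (tendsto_id.const_mul_atTop hc : Tendsto (fun t : ℝ => c * t) atTop atTop)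
    have h2 := tendsto_neg_atTop_atBot.comp this
    refine h2.congr fun t => by show -(c*t) = -c*t; ring
  have h3 : Tendsto (fun t : ℝ => ((Real.exp (-c * t) : ℝ) : ℂ)) atTop (nhds ((0:ℝ):ℂ)) :=
    (Complex.continuous_ofReal.tendsto _).comp h1
  refine (h3.congr fun t => ?_).congr' (by rfl) |>.mono_right (by simp)
  rw [Complex.ofReal_exp]
  push_cast
  ring_nf

/-- For L = |v3⟩⟨v1| + |v3⟩⟨v2| on ℂ³ and ρ_t solving the Lindblad equation with
ρ_0 = |v1⟩⟨v1|, ρ_t converges entrywise as t → ∞ to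
(1/4)(|v1⟩⟨v1| − |v1⟩⟨v2| − |v2⟩⟨v1| + |v2⟩⟨v2|) + (1/2)|v3⟩⟨v3|. -/
theorem stmt2 (L : Matrix (Fin 3) (Fin 3) ℂ) (hL : L = !![0,0,0; 0,0,0; 1,1,0])
    (ρ : ℝ → Matrix (Fin 3) (Fin 3) ℂ)
    (hρ0 : ρ 0 = !![1,0,0; 0,0,0; 0,0,0])
    (hderiv : ∀ (t : ℝ) (i j : Fin 3), HasDerivAt (fun s => ρ s i j)
      ((L * ρ t * Lᴴ - (1/2 : ℂ) • (Lᴴ * L * ρ t + ρ t * (Lᴴ * L))) i j) t) :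
    ∀ i j : Fin 3, Tendsto (fun t => ρ t i j) atTop
      (nhds ((!![1/4, -1/4, 0; -1/4, 1/4, 0; 0, 0, 1/2] : Matrix (Fin 3) (Fin 3) ℂ) i j)) := by
  subst hL
  -- entrywise ODEs
  have h00 : ∀ t, HasDerivAt (fun s => ρ s 0 0) (-(ρ t 0 0) - (ρ t 0 1 + ρ t 1 0)/2) t := by
    intro t
    convert hderiv t 0 0 using 1
    simp [Matrix.mul_apply, Fin.sum_univ_three, Matrix.conjTranspose_apply, Matrix.vecMul, dotProduct, Matrix.vecHead, Matrix.vecTail]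
    ring
  have h01 : ∀ t, HasDerivAt (fun s => ρ s 0 1) (-(ρ t 0 1) - (ρ t 0 0 + ρ t 1 1)/2) t := by
    intro t
    convert hderiv t 0 1 using 1
    simp [Matrix.mul_apply, Fin.sum_univ_three, Matrix.conjTranspose_apply, Matrix.vecMul, dotProduct, Matrix.vecHead, Matrix.vecTail]
    ring
  have h10 : ∀ t, HasDerivAt (fun s => ρ s 1 0) (-(ρ t 1 0) - (ρ t 0 0 + ρ t 1 1)/2) t := by
    intro t
    convert hderiv t 1 0 using 1
    simp [Matrix.mul_apply, Fin.sum_univ_three, Matrix.conjTranspose_apply, Matrix.vecMul, dotProduct, Matrix.vecHead, Matrix.vecTail]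
    ring
  have h11 : ∀ t, HasDerivAt (fun s => ρ s 1 1) (-(ρ t 1 1) - (ρ t 0 1 + ρ t 1 0)/2) t := by
    intro t
    convert hderiv t 1 1 using 1
    simp [Matrix.mul_apply, Fin.sum_univ_three, Matrix.conjTranspose_apply, Matrix.vecMul, dotProduct, Matrix.vecHead, Matrix.vecTail]
    ring
  have h02 : ∀ t, HasDerivAt (fun s => ρ s 0 2) (-(ρ t 0 2 + ρ t 1 2)/2) t := by
    intro t
    convert hderiv t 0 2 using 1
    simp [Matrix.mul_apply, Fin.sum_univ_three, Matrix.conjTranspose_apply, Matrix.vecMul, dotProduct, Matrix.vecHead, Matrix.vecTail]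
    ring
  have h12 : ∀ t, HasDerivAt (fun s => ρ s 1 2) (-(ρ t 0 2 + ρ t 1 2)/2) t := by
    intro t
    convert hderiv t 1 2 using 1
    simp [Matrix.mul_apply, Fin.sum_univ_three, Matrix.conjTranspose_apply, Matrix.vecMul, dotProduct, Matrix.vecHead, Matrix.vecTail]
    ring
  have h20 : ∀ t, HasDerivAt (fun s => ρ s 2 0) (-(ρ t 2 0 + ρ t 2 1)/2) t := by
    intro t
    convert hderiv t 2 0 using 1
    simp [Matrix.mul_apply, Fin.sum_univ_three, Matrix.conjTranspose_apply, Matrix.vecMul, dotProduct, Matrix.vecHead, Matrix.vecTail]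
    ring
  have h21 : ∀ t, HasDerivAt (fun s => ρ s 2 1) (-(ρ t 2 0 + ρ t 2 1)/2) t := by
    intro t
    convert hderiv t 2 1 using 1
    simp [Matrix.mul_apply, Fin.sum_univ_three, Matrix.conjTranspose_apply, Matrix.vecMul, dotProduct, Matrix.vecHead, Matrix.vecTail]
    ring
  have h22 : ∀ t, HasDerivAt (fun s => ρ s 2 2) (ρ t 0 0 + ρ t 0 1 + ρ t 1 0 + ρ t 1 1) t := by
    intro t
    convert hderiv t 2 2 using 1
    simp [Matrix.mul_apply, Fin.sum_univ_three, Matrix.conjTranspose_apply, Matrix.vecMul, dotProduct, Matrix.vecHead, Matrix.vecTail]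
    ring
  -- sum of 2x2 block
  have F1 : ∀ t, ρ t 0 0 + ρ t 0 1 + ρ t 1 0 + ρ t 1 1 = Complex.exp ((-2 : ℂ) * t) := by
    intro t
    have := ode_solve (-2) (fun s => ρ s 0 0 + ρ s 0 1 + ρ s 1 0 + ρ s 1 1)
      (fun s => by
        have h := (((h00 s).add (h01 s)).add (h10 s)).add (h11 s)
        exact h.congr_deriv (by ring)) t
    simpa [hρ0, Matrix.vecHead, Matrix.vecTail] using this
  have F2 : ∀ t, ρ t 0 0 - ρ t 0 1 - ρ t 1 0 + ρ t 1 1 = 1 := by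
    intro t
    have := ode_solve 0 (fun s => ρ s 0 0 - ρ s 0 1 - ρ s 1 0 + ρ s 1 1)
      (fun s => by
        have h := (((h00 s).sub (h01 s)).sub (h10 s)).add (h11 s)
        exact h.congr_deriv (by ring)) t
    simpa [hρ0, Matrix.vecHead, Matrix.vecTail] using this
  have F3 : ∀ t, ρ t 0 0 - ρ t 1 1 = Complex.exp ((-1 : ℂ) * t) := by
    intro t
    have := ode_solve (-1) (fun s => ρ s 0 0 - ρ s 1 1)
      (fun s => by
        have h := (h00 s).sub (h11 s)
        exact h.congr_deriv (by ring)) t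
    simpa [hρ0, Matrix.vecHead, Matrix.vecTail] using this
  have F4 : ∀ t, ρ t 0 1 - ρ t 1 0 = 0 := by
    intro t
    have := ode_solve (-1) (fun s => ρ s 0 1 - ρ s 1 0)
      (fun s => by
        have h := (h01 s).sub (h10 s)
        exact h.congr_deriv (by ring)) t
    simpa [hρ0, Matrix.vecHead, Matrix.vecTail] using this
  -- off-block entries vanish
  have F5 : ∀ t, ρ t 0 2 + ρ t 1 2 = 0 := by
    intro t
    have := ode_solve (-1) (fun s => ρ s 0 2 + ρ s 1 2)
      (fun s => by
        have h := (h02 s).add (h12 s)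
        exact h.congr_deriv (by ring)) t
    simpa [hρ0, Matrix.vecHead, Matrix.vecTail] using this
  have F5b : ∀ t, ρ t 0 2 - ρ t 1 2 = 0 := by
    intro t
    have := ode_solve 0 (fun s => ρ s 0 2 - ρ s 1 2)
      (fun s => by
        have h := (h02 s).sub (h12 s)
        exact h.congr_deriv (by ring)) t
    simpa [hρ0, Matrix.vecHead, Matrix.vecTail] using this
  have F6 : ∀ t, ρ t 2 0 + ρ t 2 1 = 0 := by
    intro t
    have := ode_solve (-1) (fun s => ρ s 2 0 + ρ s 2 1)
      (fun s => by
        have h := (h20 s).add (h21 s)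
        exact h.congr_deriv (by ring)) t
    simpa [hρ0, Matrix.vecHead, Matrix.vecTail] using this
  have F6b : ∀ t, ρ t 2 0 - ρ t 2 1 = 0 := by
    intro t
    have := ode_solve 0 (fun s => ρ s 2 0 - ρ s 2 1)
      (fun s => by
        have h := (h20 s).sub (h21 s)
        exact h.congr_deriv (by ring)) t
    simpa [hρ0, Matrix.vecHead, Matrix.vecTail] using this
  -- corner entry
  have F7 : ∀ t, ρ t 2 2 + Complex.exp ((-2 : ℂ) * t) / 2 = 1 / 2 := by
    intro t
    have := ode_solve 0 (fun s => ρ s 2 2 + Complex.exp ((-2 : ℂ) * s) / 2)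
      (fun s => by
        have h := (h22 s).add ((hasDerivAt_cexp_mul (-2) s).div_const 2)
        exact h.congr_deriv (by rw [F1 s]; ring)) t
    simpa [hρ0, Matrix.vecHead, Matrix.vecTail] using this
  -- limits of the exponentials
  have E1 : Tendsto (fun t : ℝ => Complex.exp ((-1 : ℂ) * t)) atTop (nhds 0) := by
    have := tendsto_cexp_neg 1 one_pos
    simpa using this
  have E2 : Tendsto (fun t : ℝ => Complex.exp ((-2 : ℂ) * t)) atTop (nhds 0) := by
    have := tendsto_cexp_neg 2 two_pos
    simpa using this
  intro i j
  fin_cases i <;> fin_cases j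
  · -- (0,0)
    have key : ∀ t, ρ t 0 0 = (Complex.exp ((-2:ℂ)*t) + 1 + 2 * Complex.exp ((-1:ℂ)*t)) / 4 := by
      intro t
      linear_combination (F1 t + F2 t + 2 * F3 t) / 4
    refine Tendsto.congr (fun t => (key t).symm) ?_
    have := ((E2.add_const 1).add (E1.const_mul 2)).div_const 4
    norm_num at this ⊢
    convert this using 2 <;> norm_num
  · -- (0,1)
    have key : ∀ t, ρ t 0 1 = (Complex.exp ((-2:ℂ)*t) - 1) / 4 := by
      intro t
      linear_combination (F1 t - F2 t) / 4 + F4 t / 2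
    refine Tendsto.congr (fun t => (key t).symm) ?_
    have := (E2.sub_const 1).div_const 4
    norm_num at this ⊢
    convert this using 2 <;> norm_num
  · -- (0,2)
    have key : ∀ t, ρ t 0 2 = 0 := fun t => by linear_combination (F5 t + F5b t) / 2
    refine Tendsto.congr (fun t => (key t).symm) ?_
    simp
  · -- (1,0)
    have key : ∀ t, ρ t 1 0 = (Complex.exp ((-2:ℂ)*t) - 1) / 4 := by
      intro t
      linear_combination (F1 t - F2 t) / 4 - F4 t / 2
    refine Tendsto.congr (fun t => (key t).symm) ?_
    have := (E2.sub_const 1).div_const 4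
    norm_num at this ⊢
    convert this using 2 <;> norm_num
  · -- (1,1)
    have key : ∀ t, ρ t 1 1 = (Complex.exp ((-2:ℂ)*t) + 1 - 2 * Complex.exp ((-1:ℂ)*t)) / 4 := by
      intro t
      linear_combination (F1 t + F2 t - 2 * F3 t) / 4
    refine Tendsto.congr (fun t => (key t).symm) ?_
    have := ((E2.add_const 1).sub (E1.const_mul 2)).div_const 4
    norm_num at this ⊢
    convert this using 2 <;> norm_num
  · -- (1,2)
    have key : ∀ t, ρ t 1 2 = 0 := fun t => by linear_combination (F5 t - F5b t) / 2
    refine Tendsto.congr (fun t => (key t).symm) ?_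
    simp
  · -- (2,0)
    have key : ∀ t, ρ t 2 0 = 0 := fun t => by linear_combination (F6 t + F6b t) / 2
    refine Tendsto.congr (fun t => (key t).symm) ?_
    simp
  · -- (2,1)
    have key : ∀ t, ρ t 2 1 = 0 := fun t => by linear_combination (F6 t - F6b t) / 2
    refine Tendsto.congr (fun t => (key t).symm) ?_
    simp
  · -- (2,2)
    have key : ∀ t, ρ t 2 2 = 1/2 - Complex.exp ((-2:ℂ)*t) / 2 := fun t => by
      linear_combination F7 t
    refine Tendsto.congr (fun t => (key t).symm) ?_
    have := (E2.div_const 2).const_sub (1/2 : ℂ)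
    norm_num at this ⊢
    convert this using 2 <;> norm_num
end

section
/- Let G = (V,E) be a finite directed graph with V = {v_0,...,v_{n-1}}. Define the enlarged vertex set Ṽ = ⋃_i [v_i] where [v_i] has max(indeg(v_i),1) elements ṽ_i^k. For each i with indeg(v_i) > 0, let A_i be a square matrix of size indeg(v_i) whose columns are pairwise orthogonal nonzero vectors, and define L̃ by ⟨ṽ_i^k| L̃ |ṽ_j^l⟩ = ⟨k|A_i|j⟩ if (v_j,v_i) ∈ E and 0 otherwise. Then for any ṽ_i^k, ṽ_j^l with i ≠ j we have ⟨ṽ_i^k| L̃†L̃ |ṽ_j^l⟩ = 0. -/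
open Matrix Finset

/-!
Column `⟨j, l⟩` of `L̃` does not depend on `l`: in block `m` it is the column `j` of `A_m` if
`v_j → v_m` and zero otherwise. Hence `⟨ṽ_i^k| L̃†L̃ |ṽ_j^l⟩` is the sum, over the common
children `v_m` of `v_i` and `v_j`, of the inner products of columns `i` and `j` of `A_m`, and each
of these vanishes for `i ≠ j` by orthogonality.
-/

section Sigma

variable {ι : Type*} [Fintype ι] {κ : ι → Type*} [∀ i, Fintype (κ i)]
  {α : Type*} [NonUnitalNonAssocSemiring α] [StarRing α]

theorem Matrix.conjTranspose_mul_apply_sigma (L : Matrix (Σ i, κ i) (Σ i, κ i) α)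
    (x y : Σ i, κ i) :
    (Lᴴ * L) x y = ∑ m, ∑ p : κ m, star (L ⟨m, p⟩ x) * L ⟨m, p⟩ y := by
  rw [mul_apply, ← univ_sigma_univ, sum_sigma]
  rfl

theorem Matrix.conjTranspose_mul_apply_eq_sum_common_children (E : ι → ι → Prop)
    [DecidableRel E] (A : (m : ι) → Matrix (κ m) ι α) (L : Matrix (Σ i, κ i) (Σ i, κ i) α)
    (hL : ∀ m p j l, L ⟨m, p⟩ ⟨j, l⟩ = if E j m then A m p j else 0)
    (i j : ι) (k : κ i) (l : κ j) :
    (Lᴴ * L) ⟨i, k⟩ ⟨j, l⟩ =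
      ∑ m with E i m ∧ E j m, ∑ p, star (A m p i) * A m p j := by
  rw [conjTranspose_mul_apply_sigma, sum_filter]
  refine sum_congr rfl fun m _ => ?_
  by_cases him : E i m <;> by_cases hjm : E j m <;> simp [hL, him, hjm]

end Sigma

theorem stmt5_general (n : ℕ) (E : Fin n → Fin n → Prop) [DecidableRel E]
    (indeg : Fin n → ℕ)
    (A : (i : Fin n) → Matrix (Fin (max (indeg i) 1)) (Fin n) ℂ)
    (horth : ∀ (i : Fin n) (j j' : Fin n), E j i → E j' i → j ≠ j' →
      ∑ k, star (A i k j) * A i k j' = 0)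
    (L : Matrix ((i : Fin n) × Fin (max (indeg i) 1)) ((i : Fin n) × Fin (max (indeg i) 1)) ℂ)
    (hL : ∀ (i : Fin n) (k : Fin (max (indeg i) 1)) (j : Fin n) (l : Fin (max (indeg j) 1)),
      L ⟨i, k⟩ ⟨j, l⟩ = if E j i then A i k j else 0) :
    ∀ (i j : Fin n) (k : Fin (max (indeg i) 1)) (l : Fin (max (indeg j) 1)),
      i ≠ j → (Lᴴ * L) ⟨i, k⟩ ⟨j, l⟩ = 0 := by
  intro i j k l hij
  rw [conjTranspose_mul_apply_eq_sum_common_children E A L hL]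
  exact sum_eq_zero fun m hm => horth m i j (mem_filter.1 hm).2.1 (mem_filter.1 hm).2.2 hij

/-- Enlarged-graph Lindblad operator kills moralizing terms: for a directed graph `E` on
`Fin n`, with each vertex `i` replaced by `max (indeg i) 1` copies and
`⟨ṽ_i^k| L̃ |ṽ_j^l⟩ = ⟨k|A_i|j⟩` when `(v_j, v_i) ∈ E` (0 otherwise), where the columns of
`A_i` used for the parents of `v_i` are pairwise orthogonal nonzero vectors, the matrix
`L̃†L̃` vanishes on every pair of copies of distinct vertices. -/
theorem stmt5 (n : ℕ) (E : Fin n → Fin n → Prop) [DecidableRel E]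
    (indeg : Fin n → ℕ)
    (hindeg : ∀ i, indeg i = (Finset.univ.filter fun j => E j i).card)
    (A : (i : Fin n) → Matrix (Fin (max (indeg i) 1)) (Fin n) ℂ)
    (horth : ∀ (i : Fin n) (j j' : Fin n), E j i → E j' i → j ≠ j' →
      ∑ k, star (A i k j) * A i k j' = 0)
    (hnonzero : ∀ (i : Fin n) (j : Fin n), E j i → (fun k => A i k j) ≠ 0)
    (L : Matrix ((i : Fin n) × Fin (max (indeg i) 1)) ((i : Fin n) × Fin (max (indeg i) 1)) ℂ)
    (hL : ∀ (i : Fin n) (k : Fin (max (indeg i) 1)) (j : Fin n) (l : Fin (max (indeg j) 1)),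
      L ⟨i, k⟩ ⟨j, l⟩ = if E j i then A i k j else 0) :
    ∀ (i j : Fin n) (k : Fin (max (indeg i) 1)) (l : Fin (max (indeg j) 1)),
      i ≠ j → (Lᴴ * L) ⟨i, k⟩ ⟨j, l⟩ = 0 :=
  stmt5_general n E indeg A horth L hL
end

section
/- With the setup of the enlarged-graph Lindblad operator L̃ (columns of each A_i pairwise orthogonal), let ṽ, ṽ' be vertices of the enlarged graph whose representatives v_i, v_j in G are distinct and not connected by an edge (v_j, v_i) ∉ E. Then for the Lindblad superoperator M̃(ρ) = L̃ρL̃† − (1/2){L̃†L̃, ρ}, the transition rate M̃_{ṽw̃}^{ṽ'w̃} := ⟨ṽ'| M̃(|ṽ⟩⟨w̃|) |w̃⟩ vanishes for every vertex w̃ of the enlarged graph. -/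
/-!
In ⟨ṽ'|M̃(|ṽ⟩⟨w̃|)|w̃⟩ the term |ṽ⟩⟨w̃|L̃†L̃ drops out since ṽ' ≠ ṽ, and the other two terms are
multiples of ⟨ṽ'|L̃|ṽ⟩ and ⟨ṽ'|L̃†L̃|ṽ⟩. The first vanishes because (v_i, v_j) ∉ E; the second is
a sum, over the common out-neighbours v_m of v_i and v_j, of inner products of two distinct
columns of A_m, which are orthogonal.
-/

open Matrix

section Dissipator

variable {ι 𝕜 : Type*} [Fintype ι] [DecidableEq ι] [DivisionRing 𝕜] [StarRing 𝕜]

def lindbladDissipator (L ρ : Matrix ι ι 𝕜) : Matrix ι ι 𝕜 :=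
  L * ρ * Lᴴ - (1 / 2 : 𝕜) • (Lᴴ * L * ρ + ρ * (Lᴴ * L))

theorem lindbladDissipator_single_apply_eq_zero (L : Matrix ι ι 𝕜) {a c : ι} (b d : ι)
    (hca : c ≠ a) (hL : L c a = 0) (hLL : (Lᴴ * L) c a = 0) :
    lindbladDissipator L (single a b 1) c d = 0 := by
  have hjump : (L * single a b 1 * Lᴴ : Matrix ι ι 𝕜) c d = 0 := by
    rw [mul_apply]
    refine Finset.sum_eq_zero fun q _ => ?_
    obtain rfl | hqb := eq_or_ne q b
    · rw [mul_single_apply_same, hL, zero_mul, zero_mul]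
    · rw [mul_single_apply_of_ne _ _ _ _ _ hqb, zero_mul]
  have hleft : (Lᴴ * L * single a b 1 : Matrix ι ι 𝕜) c d = 0 := by
    obtain rfl | hdb := eq_or_ne d b
    · rw [mul_single_apply_same, hLL, zero_mul]
    · exact mul_single_apply_of_ne _ _ _ _ _ hdb _
  have hright : (single a b 1 * (Lᴴ * L) : Matrix ι ι 𝕜) c d = 0 :=
    single_mul_apply_of_ne _ _ _ _ _ hca _
  simp only [lindbladDissipator, Matrix.sub_apply, Matrix.smul_apply, Matrix.add_apply,
    hjump, hleft, hright, add_zero, smul_zero, sub_zero]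

end Dissipator

section EnlargedGraph

variable {V 𝕜 : Type*} [Fintype V] {κ : V → Type*} [∀ v, Fintype (κ v)] [Semiring 𝕜]
  [StarRing 𝕜] {E : V → V → Prop} [DecidableRel E] {A : (v : V) → Matrix (κ v) V 𝕜}
  {L : Matrix (Σ v, κ v) (Σ v, κ v) 𝕜}

theorem conjTranspose_mul_self_apply_eq_zero_of_ne
    (horth : ∀ (m j j' : V), E j m → E j' m → j ≠ j' → ∑ r, star (A m r j) * A m r j' = 0)
    (hL : ∀ i k j l, L ⟨i, k⟩ ⟨j, l⟩ = if E j i then A i k j else 0)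
    {i j : V} (k : κ i) (l : κ j) (hji : j ≠ i) :
    (Lᴴ * L) ⟨j, l⟩ ⟨i, k⟩ = 0 := by
  rw [mul_apply, Fintype.sum_sigma]
  refine Finset.sum_eq_zero fun m _ => ?_
  by_cases hjm : E j m
  · by_cases him : E i m
    · simpa [conjTranspose_apply, hL, hjm, him] using horth m j i hjm him hji
    · exact Finset.sum_eq_zero fun r _ => by simp [hL, him]
  · exact Finset.sum_eq_zero fun r _ => by simp [conjTranspose_apply, hL, hjm]

end EnlargedGraph

theorem stmt6_general (n : ℕ) (E : Fin n → Fin n → Prop) [DecidableRel E]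
    (indeg : Fin n → ℕ)
    (A : (i : Fin n) → Matrix (Fin (max (indeg i) 1)) (Fin n) ℂ)
    (horth : ∀ (i : Fin n) (j j' : Fin n), E j i → E j' i → j ≠ j' →
      ∑ k, star (A i k j) * A i k j' = 0)
    (L : Matrix ((i : Fin n) × Fin (max (indeg i) 1)) ((i : Fin n) × Fin (max (indeg i) 1)) ℂ)
    (hL : ∀ (i : Fin n) (k : Fin (max (indeg i) 1)) (j : Fin n) (l : Fin (max (indeg j) 1)),
      L ⟨i, k⟩ ⟨j, l⟩ = if E j i then A i k j else 0)
    (i j : Fin n) (k : Fin (max (indeg i) 1)) (l : Fin (max (indeg j) 1))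
    (hij : i ≠ j) (hE : ¬ E i j) :
    ∀ w : (i : Fin n) × Fin (max (indeg i) 1),
      ((L * Matrix.single (Sigma.mk i k) w 1 * Lᴴ
        - (1/2 : ℂ) • (Lᴴ * L * Matrix.single (Sigma.mk i k) w 1
            + Matrix.single (Sigma.mk i k) w 1 * (Lᴴ * L)) :
        Matrix ((i : Fin n) × Fin (max (indeg i) 1)) ((i : Fin n) × Fin (max (indeg i) 1)) ℂ))
        (Sigma.mk j l) w = 0 := by
  intro w
  change lindbladDissipator L (single ⟨i, k⟩ w 1) ⟨j, l⟩ w = 0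
  have hne : (⟨j, l⟩ : (i : Fin n) × Fin (max (indeg i) 1)) ≠ ⟨i, k⟩ :=
    fun h => hij (congrArg Sigma.fst h).symm
  have hL0 : L ⟨j, l⟩ ⟨i, k⟩ = 0 := by simp [hL, hE]
  exact lindbladDissipator_single_apply_eq_zero L w w hne hL0
    (conjTranspose_mul_self_apply_eq_zero_of_ne horth hL k l hij.symm)

/-- With the enlarged-graph Lindblad operator L̃ (pairwise orthogonal parent columns of
each A_i), if ṽ = ṽ_i^k and ṽ' = ṽ_j^l have distinct representatives that are not
connected by an edge, then the transition rate
M̃_{ṽw̃}^{ṽ'w̃} = ⟨ṽ'| M̃(|ṽ⟩⟨w̃|) |w̃⟩ vanishes for every vertex w̃. -/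
theorem stmt6 (n : ℕ) (E : Fin n → Fin n → Prop) [DecidableRel E]
    (indeg : Fin n → ℕ)
    (hindeg : ∀ i, indeg i = (Finset.univ.filter fun j => E j i).card)
    (A : (i : Fin n) → Matrix (Fin (max (indeg i) 1)) (Fin n) ℂ)
    (horth : ∀ (i : Fin n) (j j' : Fin n), E j i → E j' i → j ≠ j' →
      ∑ k, star (A i k j) * A i k j' = 0)
    (hnonzero : ∀ (i : Fin n) (j : Fin n), E j i → (fun k => A i k j) ≠ 0)
    (L : Matrix ((i : Fin n) × Fin (max (indeg i) 1)) ((i : Fin n) × Fin (max (indeg i) 1)) ℂ)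
    (hL : ∀ (i : Fin n) (k : Fin (max (indeg i) 1)) (j : Fin n) (l : Fin (max (indeg j) 1)),
      L ⟨i, k⟩ ⟨j, l⟩ = if E j i then A i k j else 0)
    (i j : Fin n) (k : Fin (max (indeg i) 1)) (l : Fin (max (indeg j) 1))
    (hij : i ≠ j) (hE : ¬ E i j) :
    ∀ w : (i : Fin n) × Fin (max (indeg i) 1),
      ((L * Matrix.single (Sigma.mk i k) w 1 * Lᴴ
        - (1/2 : ℂ) • (Lᴴ * L * Matrix.single (Sigma.mk i k) w 1
            + Matrix.single (Sigma.mk i k) w 1 * (Lᴴ * L)) :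
        Matrix ((i : Fin n) × Fin (max (indeg i) 1)) ((i : Fin n) × Fin (max (indeg i) 1)) ℂ))
        (Sigma.mk j l) w = 0 :=
  stmt6_general n E indeg A horth L hL i j k l hij hE
end
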